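/- arXiv:2010.04235 — 2 statements merged into one kernel-verified Lean document; each statement's English description precedes it below -/
import Mathlib

section
/- (Exponential mechanism utility bound) Let u : [a,b] × datasets → ℝ be a utility function with sensitivity Δ_u, and let X be sampled from density proportional to exp(ε·u(x,S)/(2Δ_u)) on [a,b]. With OPT = max_x u(x, S) and H_t = {x ∈ [a,b] : u(x, S) > OPT - t}, we have P(u(X, S) ≤ OPT - t) ≤ ((b-a)/λ(H_{t/2})) · e^{-εt/(4Δ_u)}, where λ is Lebesgue measure. -/
open MeasureTheory Real

/-!
On `{u ≤ OPT - t}` the density is at most `exp (ε (OPT - t) / 2Δ)`, and this set has measure at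
most `b - a`; on `H_{t/2}` it is at least `exp (ε (OPT - t/2) / 2Δ)`, which bounds the
normalising integral from below by `λ(H_{t/2}) · exp (ε (OPT - t/2) / 2Δ)`. The quotient of the
two exponentials is `exp (-ε t / 4Δ)`. Only the monotonicity and positivity of the weight
`y ↦ exp (ε y / 2Δ)` enter.
-/

open scoped ENNReal

section MonotoneWeight

variable {α : Type*} [MeasurableSpace α] {μ : Measure α} {S : Set α} {g : α → ℝ} {w : ℝ → ℝ}

theorem Monotone.integrableOn_comp_of_le (hw : Monotone w) (hw_nonneg : ∀ y, 0 ≤ w y)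
    (hS : MeasurableSet S) (hμS : μ S ≠ ∞) (hg : Measurable g) {M : ℝ}
    (hgM : ∀ x ∈ S, g x ≤ M) : IntegrableOn (fun x ↦ w (g x)) S μ :=
  Measure.integrableOn_of_bounded hμS (hw.measurable.comp hg).aestronglyMeasurable (M := w M) <|
    (ae_restrict_iff' hS).2 <| ae_of_all _ fun x hx ↦ by
      rw [norm_of_nonneg (hw_nonneg _)]
      exact hw (hgM x hx)

theorem setIntegral_comp_sublevel_le (hw : Monotone w) (hw_nonneg : ∀ y, 0 ≤ w y)
    (hS : MeasurableSet S) (hμS : μ S ≠ ∞) (hg : Measurable g)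
    (hint : IntegrableOn (fun x ↦ w (g x)) S μ) (r : ℝ) :
    ∫ x in {x ∈ S | g x ≤ r}, w (g x) ∂μ ≤ μ.real S * w r := by
  have hsub : {x ∈ S | g x ≤ r} ⊆ S := fun x hx ↦ hx.1
  have hμ : μ {x ∈ S | g x ≤ r} ≠ ∞ := ne_top_of_le_ne_top hμS (measure_mono hsub)
  calc ∫ x in {x ∈ S | g x ≤ r}, w (g x) ∂μ ≤ ∫ _ in {x ∈ S | g x ≤ r}, w r ∂μ :=
        setIntegral_mono_on (hint.mono_set hsub) (integrableOn_const hμ)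
          (hS.inter (measurableSet_le hg measurable_const)) fun x hx ↦ hw hx.2
    _ = μ.real {x ∈ S | g x ≤ r} * w r := by rw [setIntegral_const, smul_eq_mul]
    _ ≤ μ.real S * w r :=
        mul_le_mul_of_nonneg_right (measureReal_mono hsub hμS) (hw_nonneg r)

theorem measureReal_superlevel_mul_le_setIntegral_comp (hw : Monotone w)
    (hw_nonneg : ∀ y, 0 ≤ w y) (hS : MeasurableSet S) (hμS : μ S ≠ ∞) (hg : Measurable g)
    (hint : IntegrableOn (fun x ↦ w (g x)) S μ) (s : ℝ) :
    μ.real {x ∈ S | s < g x} * w s ≤ ∫ x in S, w (g x) ∂μ := by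
  have hsub : {x ∈ S | s < g x} ⊆ S := fun x hx ↦ hx.1
  calc μ.real {x ∈ S | s < g x} * w s ≤ ∫ x in {x ∈ S | s < g x}, w (g x) ∂μ := by
        rw [mul_comm]
        exact setIntegral_ge_of_const_le_real (hS.inter (measurableSet_lt measurable_const hg))
          (ne_top_of_le_ne_top hμS (measure_mono hsub)) (fun x hx ↦ hw hx.2.le)
          (hint.mono_set hsub)
    _ ≤ ∫ x in S, w (g x) ∂μ :=
        setIntegral_mono_set hint (ae_of_all _ fun x ↦ hw_nonneg _) hsub.eventuallyLE

theorem setIntegral_comp_sublevel_div_le (hw : Monotone w) (hw_pos : ∀ y, 0 < w y)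
    (hS : MeasurableSet S) (hμS : μ S ≠ ∞) (hg : Measurable g)
    (hint : IntegrableOn (fun x ↦ w (g x)) S μ) {r s : ℝ}
    (hH : 0 < μ.real {x ∈ S | s < g x}) :
    (∫ x in {x ∈ S | g x ≤ r}, w (g x) ∂μ) / ∫ x in S, w (g x) ∂μ ≤
      μ.real S / μ.real {x ∈ S | s < g x} * (w r / w s) := by
  have hw_nonneg y := (hw_pos y).le
  calc (∫ x in {x ∈ S | g x ≤ r}, w (g x) ∂μ) / ∫ x in S, w (g x) ∂μ
      ≤ μ.real S * w r / (μ.real {x ∈ S | s < g x} * w s) :=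
        div_le_div₀ (mul_nonneg measureReal_nonneg (hw_nonneg r))
          (setIntegral_comp_sublevel_le hw hw_nonneg hS hμS hg hint r)
          (mul_pos hH (hw_pos s))
          (measureReal_superlevel_mul_le_setIntegral_comp hw hw_nonneg hS hμS hg hint s)
    _ = μ.real S / μ.real {x ∈ S | s < g x} * (w r / w s) := mul_div_mul_comm _ _ _ _

end MonotoneWeight

theorem exponential_mechanism_utility_general (a b ε Δ t OPT : ℝ) (u : ℝ → ℝ)
    (hab : a < b) (hΔ : 0 < Δ) (hε : 0 < ε)
    (hmeas : Measurable u)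
    (hOPT : IsGreatest (u '' Set.Icc a b) OPT)
    (hH : 0 < (volume {x ∈ Set.Icc a b | u x > OPT - t / 2}).toReal) :
    (∫ x in {x ∈ Set.Icc a b | u x ≤ OPT - t}, Real.exp (ε * u x / (2 * Δ))) /
        (∫ x in Set.Icc a b, Real.exp (ε * u x / (2 * Δ))) ≤
      (b - a) / (volume {x ∈ Set.Icc a b | u x > OPT - t / 2}).toReal *
        Real.exp (-(ε * t) / (4 * Δ)) := by
  set w : ℝ → ℝ := fun y ↦ Real.exp (ε * y / (2 * Δ))
  have hw : Monotone w := fun y y' h ↦ exp_le_exp.2 (by gcongr)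
  have hint : IntegrableOn (fun x ↦ w (u x)) (Set.Icc a b) :=
    hw.integrableOn_comp_of_le (fun _ ↦ (exp_pos _).le) measurableSet_Icc
      measure_Icc_lt_top.ne hmeas fun x hx ↦ hOPT.2 ⟨x, hx, rfl⟩
  have hratio : w (OPT - t) / w (OPT - t / 2) = Real.exp (-(ε * t) / (4 * Δ)) := by
    rw [← exp_sub]
    congr 1
    field_simp
    ring
  calc _ ≤ volume.real (Set.Icc a b) / volume.real {x ∈ Set.Icc a b | OPT - t / 2 < u x} *
        (w (OPT - t) / w (OPT - t / 2)) :=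
        setIntegral_comp_sublevel_div_le hw (fun _ ↦ exp_pos _) measurableSet_Icc
          measure_Icc_lt_top.ne hmeas hint hH
    _ = _ := by rw [Real.volume_real_Icc_of_le hab.le, hratio]; rfl

/-- Exponential mechanism utility bound: the probability of outputting a point
with utility at most `OPT - t` is at most `((b-a)/λ(H_{t/2}))·e^{-εt/(4Δ)}`. -/
theorem exponential_mechanism_utility (a b ε Δ t OPT : ℝ) (u : ℝ → ℝ)
    (hab : a < b) (hΔ : 0 < Δ) (hε : 0 < ε)
    (hmeas : Measurable u)
    (hbdd : ∃ M, ∀ x ∈ Set.Icc a b, |u x| ≤ M)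
    (hOPT : IsGreatest (u '' Set.Icc a b) OPT)
    (hH : 0 < (volume {x ∈ Set.Icc a b | u x > OPT - t / 2}).toReal) :
    (∫ x in {x ∈ Set.Icc a b | u x ≤ OPT - t}, Real.exp (ε * u x / (2 * Δ))) /
        (∫ x in Set.Icc a b, Real.exp (ε * u x / (2 * Δ))) ≤
      (b - a) / (volume {x ∈ Set.Icc a b | u x > OPT - t / 2}).toReal *
        Real.exp (-(ε * t) / (4 * Δ)) :=
  exponential_mechanism_utility_general a b ε Δ t OPT u hab hΔ hε hmeas hOPT hH
end

section
/- (Duff for modes) Let S be a finite multiset over a finite set Y, with n_y the multiplicity of y in S and n_max = max_y n_y. Then for any x ∈ Y, the Duff utility for the mode statistic satisfies u_d(x, S) = n_x - n_max, i.e., the minimum edit distance (additions/removals) from S to a multiset whose (unique or tie-broken maximal) mode count is achieved at x equals n_max - n_x. -/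
open MeasureTheory Real

/-- Two datasets (finite multisets) are neighbors if one is obtained from the
other by adding or removing a single element. -/
def Neighbor {α : Type*} (S S' : Multiset α) : Prop :=
  (∃ a, S' = a ::ₘ S) ∨ (∃ a, S = a ::ₘ S')

/-- Dataset distance: the minimum length `m` of a sequence
`S = S_0, S_1, ..., S_m = S'` where consecutive datasets are neighbors. -/
noncomputable def ddist {α : Type*} (S S' : Multiset α) : ℕ :=
  sInf {m | ∃ f : ℕ → Multiset α, f 0 = S ∧ f m = S' ∧ ∀ i < m, Neighbor (f i) (f (i + 1))}

/-! A lower bound `n_max - n_x` comes from the potential `φ T = n_y(T) - n_x(T)` with `y` a mode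
of `S`: a single addition or removal lowers `φ` by at most one, and `φ ≤ 0` once `x` is a mode.
Adding `n_max - n_x` copies of `x` to `S` attains the bound. -/

section Chains

variable {α : Type*}

def chainLengths (S S' : Multiset α) : Set ℕ :=
  {m | ∃ f : ℕ → Multiset α, f 0 = S ∧ f m = S' ∧ ∀ i < m, Neighbor (f i) (f (i + 1))}

theorem ddist_le_of_mem_chainLengths {S S' : Multiset α} {m : ℕ} (h : m ∈ chainLengths S S') :
    ddist S S' ≤ m :=
  Nat.sInf_le h

theorem zero_mem_chainLengths (S : Multiset α) : 0 ∈ chainLengths S S :=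
  ⟨fun _ => S, rfl, rfl, fun _ hi => absurd hi (Nat.not_lt_zero _)⟩

theorem one_mem_chainLengths {S S' : Multiset α} (h : Neighbor S S') : 1 ∈ chainLengths S S' :=
  ⟨fun i => if i = 0 then S else S', rfl, rfl, fun i hi => by
    obtain rfl : i = 0 := Nat.lt_one_iff.mp hi
    exact h⟩

theorem add_mem_chainLengths {S T S' : Multiset α} {m n : ℕ}
    (hm : m ∈ chainLengths S T) (hn : n ∈ chainLengths T S') : m + n ∈ chainLengths S S' := by
  obtain ⟨f, hf0, hfm, hf⟩ := hm
  obtain ⟨g, hg0, hgn, hg⟩ := hn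
  -- the junction `i = m` is covered by both pieces, since `f m = T = g 0`
  have hjoin : ∀ i, (if i ≤ m then f i else g (i - m)) = if i < m then f i else g (i - m) := by
    intro i
    rcases lt_trichotomy i m with h | rfl | h
    · simp [h, h.le]
    · simp [hfm, hg0]
    · simp [h.not_ge, h.not_gt]
  refine ⟨fun i => if i ≤ m then f i else g (i - m), by simpa using hf0, ?_, fun i hi => ?_⟩
  · show (if m + n ≤ m then f (m + n) else g (m + n - m)) = S'
    rw [hjoin]
    simpa using hgn
  · by_cases him : i < m
    · simpa [him.le, Nat.succ_le_of_lt him] using hf i him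
    · have hstep := hg (i - m) (by omega)
      rw [show i - m + 1 = i + 1 - m by omega] at hstep
      simpa only [hjoin, him, show ¬ i + 1 < m by omega, if_false] using hstep

theorem card_mem_chainLengths_to_add (S T : Multiset α) : T.card ∈ chainLengths S (T + S) := by
  induction T using Multiset.induction_on with
  | empty => simpa using zero_mem_chainLengths S
  | cons a T ih =>
    simpa using add_mem_chainLengths ih (one_mem_chainLengths (Or.inl ⟨a, rfl⟩))

theorem card_mem_chainLengths_from_add (S T : Multiset α) : T.card ∈ chainLengths (T + S) S := by
  induction T using Multiset.induction_on with
  | empty => simpa using zero_mem_chainLengths S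
  | cons a T ih =>
    simpa [add_comm] using
      add_mem_chainLengths (one_mem_chainLengths (Or.inr ⟨a, Multiset.cons_add a T S⟩)) ih

theorem chainLengths_nonempty (S S' : Multiset α) : (chainLengths S S').Nonempty :=
  ⟨S'.card + S.card,
    add_mem_chainLengths (card_mem_chainLengths_to_add S S')
      (add_comm S S' ▸ card_mem_chainLengths_from_add S' S)⟩

theorem ddist_mem_chainLengths (S S' : Multiset α) : ddist S S' ∈ chainLengths S S' :=
  Nat.sInf_mem (chainLengths_nonempty S S')

theorem le_add_of_mem_chainLengths {φ : Multiset α → ℤ}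
    (hφ : ∀ T T', Neighbor T T' → φ T ≤ φ T' + 1) {S S' : Multiset α} {m : ℕ}
    (hm : m ∈ chainLengths S S') : φ S ≤ φ S' + m := by
  obtain ⟨f, rfl, rfl, hf⟩ := hm
  suffices ∀ j ≤ m, φ (f 0) ≤ φ (f j) + j from this m le_rfl
  intro j hj
  induction j with
  | zero => simp
  | succ j ih =>
    have := hφ _ _ (hf j hj)
    push_cast
    linarith [ih (Nat.le_of_succ_le hj)]

theorem le_add_ddist {φ : Multiset α → ℤ} (hφ : ∀ T T', Neighbor T T' → φ T ≤ φ T' + 1)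
    (S S' : Multiset α) : φ S ≤ φ S' + ddist S S' :=
  le_add_of_mem_chainLengths hφ (ddist_mem_chainLengths S S')

theorem ddist_le_card_add (S T : Multiset α) : ddist S (T + S) ≤ T.card :=
  ddist_le_of_mem_chainLengths (card_mem_chainLengths_to_add S T)

end Chains

section Mode

variable {α : Type*} [DecidableEq α]

def IsMode (S : Multiset α) (x : α) : Prop :=
  ∀ y, S.count y ≤ S.count x

theorem count_sub_count_le_of_neighbor (x y : α) {T T' : Multiset α} (h : Neighbor T T') :
    (T.count y : ℤ) - T.count x ≤ (T'.count y : ℤ) - T'.count x + 1 := by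
  rcases h with ⟨a, rfl⟩ | ⟨a, rfl⟩ <;>
  · simp only [Multiset.count_cons]
    split_ifs <;> omega

theorem count_sub_count_le_ddist {S S' : Multiset α} {x : α} (h : IsMode S' x) (y : α) :
    (S.count y : ℤ) - S.count x ≤ ddist S S' := by
  have := le_add_ddist (φ := fun T => (T.count y : ℤ) - T.count x)
    (fun _ _ => count_sub_count_le_of_neighbor x y) S S'
  have := h y
  omega

theorem isMode_replicate_add {S : Multiset α} {x : α} {k : ℕ}
    (h : ∀ y, S.count y ≤ S.count x + k) : IsMode (Multiset.replicate k x + S) x := by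
  intro y
  simp only [Multiset.count_add, Multiset.count_replicate_self, Multiset.count_replicate]
  have := h y
  split_ifs with hxy
  · rw [hxy]
  · omega

end Mode

/-- Duff for modes: the minimum edit distance from `S` to a multiset in which
`x` attains the maximal multiplicity equals `n_max - n_x`. -/
theorem duff_mode {Y : Type*} [Fintype Y] [DecidableEq Y] (S : Multiset Y) (x : Y) :
    sInf {m | ∃ S' : Multiset Y, ddist S S' = m ∧ ∀ y, S'.count y ≤ S'.count x} =
      (Finset.univ.sup fun y => S.count y) - S.count x := by
  set N := Finset.univ.sup fun y => S.count y
  have hcount_le : ∀ y, S.count y ≤ N := fun y =>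
    Finset.le_sup (f := fun y => S.count y) (Finset.mem_univ y)
  obtain ⟨y, -, hy⟩ :=
    Finset.exists_mem_eq_sup Finset.univ ⟨x, Finset.mem_univ x⟩ fun y => S.count y
  have hmem : ddist S (Multiset.replicate (N - S.count x) x + S) ∈
      {m | ∃ S' : Multiset Y, ddist S S' = m ∧ ∀ y, S'.count y ≤ S'.count x} :=
    ⟨_, rfl, isMode_replicate_add fun z => by have := hcount_le z; omega⟩
  apply le_antisymm
  · simpa using (Nat.sInf_le hmem).trans (ddist_le_card_add S _)
  · obtain ⟨S', hS', hmode⟩ := Nat.sInf_mem ⟨_, hmem⟩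
    have := count_sub_count_le_ddist (S := S) hmode y
    omega
end
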